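/- arXiv:1704.02668 — 4 statements merged into one kernel-verified Lean document; each statement's English description precedes it below -/
import Mathlib

section
/- Let O be a discrete valuation ring with maximal ideal 𝔪, uniformizer π, and finite residue field of cardinality q. Let M ⊆ Mat_{d×e}(O) be an O-submodule and let π^m M = {π^m a : a ∈ M}. For an integer n, let N_n denote the image of a submodule N ⊆ Mat_{d×e}(O) under entrywise reduction into Mat_{d×e}(O/𝔪^n). Then for all n ≥ m ≥ 0, ask((π^m M)_n) = q^{d m} · ask(M_{n-m}). -/
/-- The average size of the kernel of the elements of a set `N` of `m × n` matrices
over a commutative ring `S`, where matrices act on row vectors by right multiplication. -/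
noncomputable def ask {S : Type*} [CommRing S] {m n : Type*} [Fintype m]
    (N : Set (Matrix m n S)) : ℚ :=
  (Nat.card N : ℚ)⁻¹ *
    ∑ᶠ a : N, (Nat.card {x : m → S | Matrix.vecMul x (a : Matrix m n S) = 0} : ℚ)

/-- The image of a set of matrices over `R` under entrywise reduction modulo an ideal `c`. -/
def reduceMod {R : Type*} [CommRing R] {d e : ℕ}
    (N : Set (Matrix (Fin d) (Fin e) R)) (c : Ideal R) :
    Set (Matrix (Fin d) (Fin e) (R ⧸ c)) :=
  (fun A : Matrix (Fin d) (Fin e) R => A.map (Ideal.Quotient.mk c)) '' N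

/-!
Multiplication by `π ^ m` embeds `O ⧸ 𝔪 ^ (n - m)` into `O ⧸ 𝔪 ^ n`, and `(π ^ m M)_n` is the
entrywise image of `M_{n-m}` under this embedding, so the two averages run over the same index
set. For a matrix `A` over `O ⧸ 𝔪 ^ (n - m)` one has `x (π ^ m A) = π ^ m ((x mod 𝔪 ^ (n - m)) A)`:
the kernel of `π ^ m A` is the preimage of the kernel of `A` under the reduction
`(O ⧸ 𝔪 ^ n)^d → (O ⧸ 𝔪 ^ (n - m))^d`. The kernel of that reduction is `π ^ (n - m)` times
`(O ⧸ 𝔪 ^ m)^d`, which has `q ^ (d m)` elements, the same embedding giving `|O ⧸ 𝔪 ^ k| = q ^ k`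
by induction on `k`.
-/

open Function Set Matrix

theorem card_preimage_of_surjective {G H F : Type*} [AddGroup G] [AddGroup H] [FunLike F G H]
    [AddMonoidHomClass F G H] (f : F) (hf : Surjective f) (S : Set H) :
    Nat.card (f ⁻¹' S) = Nat.card (f ⁻¹' {0}) * Nat.card S := by
  let e := QuotientAddGroup.quotientKerEquivOfSurjective (f : G →+ H) hf
  have hpre : f ⁻¹' S = QuotientAddGroup.mk ⁻¹' (e ⁻¹' S) := rfl
  rw [hpre, Nat.card_congr (QuotientAddGroup.preimageMkEquivAddSubgroupProdSet _ _),
    Nat.card_prod, Nat.card_preimage_of_injective e.injective (by simp [e.surjective.range_eq])]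
  rfl

theorem ask_image_of_injective {S T : Type*} [CommRing S] [CommRing T] {ι κ : Type*} [Fintype ι]
    {Φ : Matrix ι κ S → Matrix ι κ T} (hΦ : Injective Φ) (N : Set (Matrix ι κ S)) (c : ℕ)
    (hc : ∀ a ∈ N, Nat.card {x : ι → T | x ᵥ* Φ a = 0} =
      c * Nat.card {x : ι → S | x ᵥ* a = 0}) :
    ask (Φ '' N) = c * ask N := by
  unfold ask
  rw [Nat.card_image_of_injective hΦ, ← finsum_comp_equiv (Equiv.Set.image Φ N hΦ)]
  have hterm (a : N) :
      (Nat.card {x : ι → T | x ᵥ* (Equiv.Set.image Φ N hΦ a : Matrix ι κ T) = 0} : ℚ) =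
        c * Nat.card {x : ι → S | x ᵥ* (a : Matrix ι κ S) = 0} := by
    exact_mod_cast hc a a.2
  rw [finsum_congr hterm, ← mul_finsum]
  ring

section SpanSingletonPow

open Ideal

variable {R : Type*} [CommRing R] (π : R)

theorem Ideal.mem_span_singleton_pow {x : R} {k : ℕ} : x ∈ span {π} ^ k ↔ π ^ k ∣ x := by
  rw [span_singleton_pow, mem_span_singleton]

noncomputable def mulPowQuot (m n : ℕ) : R ⧸ span {π} ^ (n - m) →ₗ[R] R ⧸ span {π} ^ n :=
  (span {π} ^ (n - m)).liftQ (π ^ m • (span {π} ^ n).mkQ) fun x hx => by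
    obtain ⟨c, rfl⟩ := (mem_span_singleton_pow π).mp hx
    rw [LinearMap.mem_ker, LinearMap.smul_apply, Submodule.mkQ_apply, ← Submodule.Quotient.mk_smul,
      Submodule.Quotient.mk_eq_zero, smul_eq_mul, mem_span_singleton_pow, ← mul_assoc, ← pow_add]
    exact (pow_dvd_pow π (by omega)).mul_right c

variable {π}

theorem mulPowQuot_mk (m n : ℕ) (y : R) :
    mulPowQuot π m n (Ideal.Quotient.mk _ y) = Ideal.Quotient.mk _ (π ^ m * y) :=
  Submodule.liftQ_apply _ _ y

theorem mul_mulPowQuot (m n : ℕ) (c : R ⧸ span {π} ^ n) (b : R ⧸ span {π} ^ (n - m)) :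
    c * mulPowQuot π m n b =
      mulPowQuot π m n (Quotient.factor (pow_le_pow_right (n.sub_le m)) c * b) := by
  obtain ⟨z, rfl⟩ := Ideal.Quotient.mk_surjective c
  obtain ⟨y, rfl⟩ := Ideal.Quotient.mk_surjective b
  rw [Quotient.factor_mk, ← map_mul, mulPowQuot_mk, mulPowQuot_mk, ← map_mul, mul_left_comm]

theorem range_mulPowQuot {m n : ℕ} (hmn : m ≤ n) :
    range (mulPowQuot π m n) = Quotient.factor (pow_le_pow_right hmn) ⁻¹' {0} := by
  ext x
  obtain ⟨y, rfl⟩ := Ideal.Quotient.mk_surjective x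
  rw [mem_preimage, Quotient.factor_mk, mem_singleton_iff, Quotient.eq_zero_iff_mem,
    mem_span_singleton_pow]
  constructor
  · rintro ⟨b, hb⟩
    obtain ⟨z, rfl⟩ := Ideal.Quotient.mk_surjective b
    rw [mulPowQuot_mk, Ideal.Quotient.eq, mem_span_singleton_pow] at hb
    exact (dvd_sub_right (dvd_mul_right _ z)).mp ((pow_dvd_pow π hmn).trans hb)
  · rintro ⟨c, rfl⟩
    exact ⟨Ideal.Quotient.mk _ c, mulPowQuot_mk m n c⟩

theorem mulPowQuot_injective [IsDomain R] (hπ : π ≠ 0) {m n : ℕ} (hmn : m ≤ n) :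
    Injective (mulPowQuot π m n) := by
  rw [injective_iff_map_eq_zero]
  intro x hx
  obtain ⟨y, rfl⟩ := Ideal.Quotient.mk_surjective x
  rw [mulPowQuot_mk, Quotient.eq_zero_iff_mem, mem_span_singleton_pow,
    ← Nat.add_sub_cancel' hmn, pow_add, mul_dvd_mul_iff_left (pow_ne_zero m hπ)] at hx
  rwa [Quotient.eq_zero_iff_mem, mem_span_singleton_pow]

theorem card_factor_preimage_zero [IsDomain R] (hπ : π ≠ 0) {m n : ℕ} (hmn : m ≤ n) :
    Nat.card (Quotient.factor (pow_le_pow_right (I := span {π}) hmn) ⁻¹' {0}) =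
      Nat.card (R ⧸ span {π} ^ (n - m)) := by
  rw [← range_mulPowQuot hmn, Nat.card_range_of_injective (mulPowQuot_injective hπ hmn)]

theorem card_quotient_span_singleton_pow [IsDomain R] (hπ : π ≠ 0) (k : ℕ) :
    Nat.card (R ⧸ span {π} ^ k) = Nat.card (R ⧸ span {π}) ^ k := by
  induction k with
  | zero => rw [pow_zero, one_eq_top, Nat.card_unique, pow_zero]
  | succ k ih =>
    have h := card_preimage_of_surjective _ (Quotient.factor_surjective
      (pow_le_pow_right (I := span {π}) (k.le_add_right 1))) univ
    rw [preimage_univ, Nat.card_univ, Nat.card_univ,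
      card_factor_preimage_zero hπ (k.le_add_right 1), Nat.add_sub_cancel_left, pow_one] at h
    rw [h, ih, pow_succ']

variable {ι κ : Type*} [Fintype ι]

theorem vecMul_map_mulPowQuot (m n : ℕ) (x : ι → R ⧸ span {π} ^ n)
    (A : Matrix ι κ (R ⧸ span {π} ^ (n - m))) :
    x ᵥ* A.map (mulPowQuot π m n) =
      mulPowQuot π m n ∘ ((Quotient.factor (pow_le_pow_right (n.sub_le m)) ∘ x) ᵥ* A) := by
  ext j
  simp only [vecMul, dotProduct, map_apply, Function.comp_apply, map_sum, mul_mulPowQuot]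

theorem card_vecMul_map_mulPowQuot_eq_zero [IsDomain R] (hπ : π ≠ 0) {m n : ℕ} (hmn : m ≤ n)
    (A : Matrix ι κ (R ⧸ span {π} ^ (n - m))) :
    Nat.card {x : ι → R ⧸ span {π} ^ n | x ᵥ* A.map (mulPowQuot π m n) = 0} =
      Nat.card (R ⧸ span {π}) ^ (Fintype.card ι * m) * Nat.card {y | y ᵥ* A = 0} := by
  set ρ := Quotient.factor (pow_le_pow_right (I := span {π}) (n.sub_le m))
  have hset : {x : ι → R ⧸ span {π} ^ n | x ᵥ* A.map (mulPowQuot π m n) = 0} =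
      ρ.compLeft ι ⁻¹' {y | y ᵥ* A = 0} := by
    ext x
    simp only [mem_ofPred_eq, mem_preimage, vecMul_map_mulPowQuot, funext_iff, Function.comp_apply,
      Pi.zero_apply, (mulPowQuot_injective hπ hmn).eq_iff' (map_zero _)]
    rfl
  have hker : Nat.card (ρ.compLeft ι ⁻¹' {0}) = Nat.card (R ⧸ span {π}) ^ (Fintype.card ι * m) := by
    have e : (ρ.compLeft ι ⁻¹' {0} : Set _) ≃ (ι → ρ ⁻¹' {0}) :=
      (Equiv.subtypeEquivRight fun x => by simp [funext_iff]).trans Equiv.subtypePiEquivPi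
    rw [Nat.card_congr e, Nat.card_pi, Finset.prod_const, card_factor_preimage_zero hπ (n.sub_le m),
      Nat.sub_sub_self hmn, card_quotient_span_singleton_pow hπ, Finset.card_univ, ← pow_mul,
      mul_comm]
  have hρ : Surjective ρ := Quotient.factor_surjective _
  rw [hset, card_preimage_of_surjective (ρ.compLeft ι) hρ.comp_left, hker]

end SpanSingletonPow

theorem reduceMod_image_pow_smul {R : Type*} [CommRing R] (π : R) {d e : ℕ}
    (M : Set (Matrix (Fin d) (Fin e) R)) (m n : ℕ) :
    reduceMod ((fun A => π ^ m • A) '' M) (Ideal.span {π} ^ n) =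
      (fun A => A.map (mulPowQuot π m n)) '' reduceMod M (Ideal.span {π} ^ (n - m)) := by
  simp only [reduceMod, image_image]
  refine image_congr fun A _ => ?_
  ext i j
  simp [mulPowQuot_mk]

theorem ask_rescale_general {O : Type*} [CommRing O] [IsDomain O] [IsDiscreteValuationRing O]
    (π : O) (hπ : Irreducible π)
    (q : ℕ) (hq : Nat.card (IsLocalRing.ResidueField O) = q)
    {d e : ℕ} (M : Submodule O (Matrix (Fin d) (Fin e) O))
    (m n : ℕ) (hmn : m ≤ n) :
    ask (reduceMod ((fun A => π ^ m • A) '' (M : Set (Matrix (Fin d) (Fin e) O)))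
        (IsLocalRing.maximalIdeal O ^ n)) =
      (q : ℚ) ^ (d * m) *
        ask (reduceMod (M : Set (Matrix (Fin d) (Fin e) O))
          (IsLocalRing.maximalIdeal O ^ (n - m))) := by
  have hmax := (IsDiscreteValuationRing.irreducible_iff_uniformizer π).mp hπ
  have hq' : Nat.card (O ⧸ Ideal.span {π}) = q := hmax ▸ hq
  rw [hmax, reduceMod_image_pow_smul, ask_image_of_injective
    (map_injective (mulPowQuot_injective hπ.ne_zero hmn)) _ (q ^ (d * m))]
  · norm_cast
  · intro A _
    rw [card_vecMul_map_mulPowQuot_eq_zero hπ.ne_zero hmn, hq', Fintype.card_fin]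

/-- Rescaling: for a DVR `O` with uniformizer `π` and residue field of cardinality `q`,
a submodule `M ⊆ Mat_{d×e}(O)` and `n ≥ m ≥ 0`,
`ask((π^m M)_n) = q^(d·m) · ask(M_{n-m})`. -/
theorem ask_rescale {O : Type*} [CommRing O] [IsDomain O] [IsDiscreteValuationRing O]
    (π : O) (hπ : Irreducible π)
    [Finite (IsLocalRing.ResidueField O)]
    (q : ℕ) (hq : Nat.card (IsLocalRing.ResidueField O) = q)
    {d e : ℕ} (M : Submodule O (Matrix (Fin d) (Fin e) O))
    (m n : ℕ) (hmn : m ≤ n) :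
    ask (reduceMod ((fun A => π ^ m • A) '' (M : Set (Matrix (Fin d) (Fin e) O)))
        (IsLocalRing.maximalIdeal O ^ n)) =
      (q : ℚ) ^ (d * m) *
        ask (reduceMod (M : Set (Matrix (Fin d) (Fin e) O))
          (IsLocalRing.maximalIdeal O ^ (n - m))) :=
  ask_rescale_general π hπ q hq M m n hmn
end

section
/- Let O be a discrete valuation ring with maximal ideal 𝔪 and finite residue field, and let d > 1. Let sl_d(O) = {a ∈ Mat_d(O) : trace(a) = 0}. For n ≥ 0, let sl_d(O)_n denote the image of sl_d(O) under entrywise reduction Mat_d(O) → Mat_d(O/𝔪^n). Then for every n ≥ 0, ask(sl_d(O)_n) = ask(Mat_d(O/𝔪^n)); that is, the ask zeta functions of sl_d(O) and of the full matrix algebra gl_d(O) coincide. -/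
open Matrix Finset

section ask

variable {S : Type*} [CommRing S] [Finite S] {m n : Type*} [Fintype m] [Finite n]

theorem ask_eq_inv_card_mul_finsum_card (N : Set (Matrix m n S)) :
    ask N = (Nat.card N : ℚ)⁻¹ * ∑ᶠ x : m → S, (Nat.card {a | a ∈ N ∧ x ᵥ* a = 0} : ℚ) := by
  classical
  have := Fintype.ofFinite S
  have := Fintype.ofFinite n
  rw [ask, finsum_eq_sum_of_fintype, finsum_eq_sum_of_fintype]
  congr 1
  simp only [Nat.card_eq_fintype_card, Fintype.card_subtype, Set.mem_ofPred_eq]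
  rw [Finset.sum_set_coe (f := fun a => (#{x : m → S | x ᵥ* a = 0} : ℚ))]
  norm_cast
  have key := sum_card_bipartiteAbove_eq_sum_card_bipartiteBelow (s := N.toFinset) (t := univ)
    (r := fun a (x : m → S) => x ᵥ* a = 0)
  simpa only [bipartiteAbove, bipartiteBelow, ← Set.filter_mem_univ_eq_toFinset, filter_filter]
    using key

theorem ask_eq_ask_of_card_ker_eq_mul {N N' : Set (Matrix m n S)} {k : ℕ} (hk : k ≠ 0)
    (h : ∀ x : m → S,
      Nat.card {a | a ∈ N' ∧ x ᵥ* a = 0} = k * Nat.card {a | a ∈ N ∧ x ᵥ* a = 0}) :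
    ask N' = ask N := by
  have hcard : Nat.card N' = k * Nat.card N := by simpa using h 0
  rw [ask_eq_inv_card_mul_finsum_card, ask_eq_inv_card_mul_finsum_card, hcard]
  simp_rw [h, Nat.cast_mul]
  rw [← mul_finsum, mul_inv, mul_mul_mul_comm, inv_mul_cancel₀ (Nat.cast_ne_zero.mpr hk), one_mul]

end ask

theorem Matrix.image_map_setOf_trace_eq_zero {m : Type*} [Fintype m] [DecidableEq m] [Nonempty m]
    {R S F : Type*} [AddCommGroup R] [AddCommGroup S] [FunLike F R S] [AddMonoidHomClass F R S]
    {f : F} (hf : Function.Surjective f) :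
    (fun A : Matrix m m R => A.map f) '' {A | A.trace = 0} = {B | B.trace = 0} := by
  ext B
  refine ⟨?_, fun hB => ?_⟩
  · rintro ⟨A, hA, rfl⟩
    simp [← AddMonoidHom.map_trace, hA.out]
  choose g hg using hf
  have hgB : (B.map g).map f = B := by ext; simp [hg]
  have htr : f (B.map g).trace = 0 := by rw [AddMonoidHom.map_trace, hgB, hB.out]
  inhabit m
  refine ⟨B.map g - single default default (B.map g).trace, by simp, ?_⟩
  ext i j
  simp [single, apply_ite f, htr, hg]

section annihilator

variable {R : Type*} [CommRing R] {m : Type*} [Fintype m]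

theorem card_setOf_vecMul_eq_zero_of_trace_eq_one {x : m → R} {E : Matrix m m R}
    (hE : x ᵥ* E = 0) (hE₁ : E.trace = 1) :
    Nat.card {a : Matrix m m R | x ᵥ* a = 0} =
      Nat.card R * Nat.card {a : Matrix m m R | a.trace = 0 ∧ x ᵥ* a = 0} := by
  rw [← Nat.card_prod]
  refine Nat.card_congr
    { toFun a := ⟨a.1.trace, a - a.1.trace • E, by simp [hE₁],
        by simp [vecMul_sub, vecMul_smul, a.2.out, hE]⟩
      invFun p := ⟨p.2 + p.1 • E, by simp [vecMul_add, vecMul_smul, p.2.2.2, hE]⟩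
      left_inv a := by simp
      right_inv p := by ext <;> simp [p.2.2.1, hE₁] }

variable [DecidableEq m]

theorem Matrix.vecMul_single (x : m → R) (i j : m) (c : R) :
    x ᵥ* single i j c = Pi.single j (x i * c) := by
  ext k
  simp [vecMul, dotProduct, single, Pi.single_apply, eq_comm, ite_and]

theorem exists_vecMul_eq_zero_trace_eq_one [PreValuationRing R] (x : m → R) {i j : m}
    (hij : i ≠ j) : ∃ E : Matrix m m R, x ᵥ* E = 0 ∧ E.trace = 1 := by
  wlog hdvd : x i ∣ x j generalizing i j
  · exact this hij.symm ((ValuationRing.dvd_total (x i) (x j)).resolve_left hdvd)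
  obtain ⟨c, hc⟩ := hdvd
  refine ⟨single j j 1 - single i j c, ?_, ?_⟩
  · simp [vecMul_sub, vecMul_single, hc]
  · simp [trace_single_eq_of_ne _ _ _ hij]

end annihilator

/-- For `d > 1`, the ask zeta function of `sl_d(O)` coincides with that of `gl_d(O)`:
at every level `n`, `ask(sl_d(O)_n) = ask(Mat_d(O/𝔪^n))`. -/
theorem ask_sl_eq_ask_gl {O : Type*} [CommRing O] [IsDomain O] [IsDiscreteValuationRing O]
    [Finite (IsLocalRing.ResidueField O)]
    {d : ℕ} (hd : 1 < d) (n : ℕ) :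
    ask (reduceMod {a : Matrix (Fin d) (Fin d) O | a.trace = 0}
        (IsLocalRing.maximalIdeal O ^ n)) =
      ask (Set.univ : Set (Matrix (Fin d) (Fin d) (O ⧸ IsLocalRing.maximalIdeal O ^ n))) := by
  have : Finite (O ⧸ IsLocalRing.maximalIdeal O ^ n) :=
    IsLocalRing.finite_quotient_iff.mpr ⟨n, le_rfl⟩
  have : PreValuationRing (O ⧸ IsLocalRing.maximalIdeal O ^ n) :=
    Ideal.Quotient.mk_surjective.preValuationRing
      (Ideal.Quotient.mk (IsLocalRing.maximalIdeal O ^ n)).toMonoidHom.toMulHom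
  have : Nonempty (Fin d) := ⟨⟨0, by omega⟩⟩
  rw [reduceMod, image_map_setOf_trace_eq_zero Ideal.Quotient.mk_surjective]
  refine (ask_eq_ask_of_card_ker_eq_mul (k := Nat.card (O ⧸ IsLocalRing.maximalIdeal O ^ n))
    Nat.card_pos.ne' fun x => ?_).symm
  obtain ⟨E, hE, hE₁⟩ := exists_vecMul_eq_zero_trace_eq_one x
    (i := ⟨0, by omega⟩) (j := ⟨1, hd⟩) (by simp [Fin.ext_iff])
  simpa using card_setOf_vecMul_eq_zero_of_trace_eq_one hE hE₁
end

section
/- Let O be a discrete valuation ring with maximal ideal 𝔪 and finite residue field, and suppose 2 ≠ 0 in O (equivalently, the fraction field of O has characteristic ≠ 2). Let so_d(O) = {a ∈ Mat_d(O) : a + a^⊤ = 0}. For n ≥ 0, let so_d(O)_n denote the image of so_d(O) under entrywise reduction Mat_d(O) → Mat_d(O/𝔪^n). Then for every n ≥ 0, ask(so_d(O)_n) = ask(Mat_{d×(d-1)}(O/𝔪^n)); that is, the ask zeta function of so_d(O) equals that of the full module of d×(d-1) matrices over O. -/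
/-!
Orbit counting: for an additive group `N` of matrices, `|{a ∈ N : x a = 0}| · |x N| = |N|`, so
`ask N = ∑ₓ |x N|⁻¹`, and it suffices to compare the orbits `x N` of a row vector `x`.

Over `S = O/𝔪ⁿ` every row vector is `x = c • x'` with some coordinate of `x'` equal to `1`.
Since `2 ≠ 0` in the domain `O`, reductions `K` of skew-symmetric matrices are alternating, so
`x' K` lies in the hyperplane `x'^⊥`; conversely `p zᵀ - z pᵀ ∈ K` with `x' ⬝ p = 1` is sent to `z`,
so `x' K = x'^⊥`. Dropping the coordinate where `x'` is `1` identifies `x'^⊥` with `S^(d-1)`, hence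
`x K = c • x'^⊥` has as many elements as `c • S^(d-1) = x Mat_{d×(d-1)}(S)`.
-/

open Matrix Pointwise

theorem ask_eq_finsum_inv_card_image {S ι κ : Type*} [CommRing S] [Finite S] [Fintype ι]
    [Finite κ] (N : AddSubgroup (Matrix ι κ S)) :
    ask (N : Set (Matrix ι κ S)) =
      ∑ᶠ x : ι → S, ((Nat.card ((fun a => x ᵥ* a) '' (N : Set (Matrix ι κ S))) : ℚ))⁻¹ := by
  classical
  have : Fintype S := .ofFinite S
  have : Fintype κ := .ofFinite κ
  let φ (x : ι → S) : N →+ (κ → S) :=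
    { toFun a := x ᵥ* a
      map_zero' := vecMul_zero x
      map_add' a b := vecMul_add _ _ x }
  have card_ker_mul_card_range (x : ι → S) :
      Nat.card (φ x).ker * Nat.card ((fun a => x ᵥ* a) '' (N : Set (Matrix ι κ S))) =
        Nat.card N := by
    have hrange :
        ((φ x).range : Set (κ → S)) = (fun a => x ᵥ* a) '' (N : Set (Matrix ι κ S)) := by
      ext; simp [φ]
    rw [← AddSubgroup.card_mul_index (φ x).ker, AddSubgroup.index_ker, ← hrange]
    rfl
  have double_count : ∑ a : N, Nat.card {x : ι → S | x ᵥ* (a : Matrix ι κ S) = 0} =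
      ∑ x : ι → S, Nat.card (φ x).ker := by
    simp only [Nat.card_eq_fintype_card, Fintype.card_subtype, Finset.card_filter,
      AddMonoidHom.mem_ker]
    exact Finset.sum_comm
  rw [ask, finsum_eq_sum_of_fintype, finsum_eq_sum_of_fintype]
  change (Nat.card N : ℚ)⁻¹ *
    ∑ a : N, (Nat.card {x : ι → S | x ᵥ* (a : Matrix ι κ S) = 0} : ℚ) = _
  rw [← Nat.cast_sum, double_count, Nat.cast_sum, Finset.mul_sum]
  refine Finset.sum_congr rfl fun x _ => ?_
  have hker : (Nat.card (φ x).ker : ℚ) ≠ 0 := Nat.cast_ne_zero.mpr Nat.card_pos.ne'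
  rw [← card_ker_mul_card_range x, Nat.cast_mul, mul_inv, mul_comm, ← mul_assoc,
    mul_inv_cancel₀ hker, one_mul]

section Unimodular

variable {S : Type*} [CommRing S]

theorem dotProduct_eq_mul_add_dotProduct_comp_succAbove {m : ℕ} (x z : Fin (m + 1) → S)
    (i : Fin (m + 1)) : x ⬝ᵥ z = x i * z i + (x ∘ i.succAbove) ⬝ᵥ (z ∘ i.succAbove) :=
  Fin.sum_univ_succAbove _ i

variable {m : ℕ} {x : Fin (m + 1) → S} {i : Fin (m + 1)}

theorem injOn_comp_succAbove_setOf_dotProduct_eq_zero (hx : x i = 1) :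
    Set.InjOn (· ∘ i.succAbove) {z | x ⬝ᵥ z = 0} := by
  intro z hz z' hz' (h : z ∘ i.succAbove = z' ∘ i.succAbove)
  have hz_i (z : Fin (m + 1) → S) (hz : x ⬝ᵥ z = 0) :
      z i = -((x ∘ i.succAbove) ⬝ᵥ (z ∘ i.succAbove)) := by
    rw [dotProduct_eq_mul_add_dotProduct_comp_succAbove x z i, hx, one_mul] at hz
    exact eq_neg_of_add_eq_zero_left hz
  ext j
  induction j using Fin.succAboveCases i with
  | x => rw [hz_i z hz, hz_i z' hz', h]
  | p k => exact congrFun h k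

theorem image_comp_succAbove_setOf_dotProduct_eq_zero (hx : x i = 1) :
    (· ∘ i.succAbove) '' {z | x ⬝ᵥ z = 0} = Set.univ := by
  refine Set.eq_univ_of_forall fun w => ⟨i.insertNth (-((x ∘ i.succAbove) ⬝ᵥ w)) w, ?_, ?_⟩
  · simp [dotProduct_eq_mul_add_dotProduct_comp_succAbove _ _ i, hx, Fin.insertNth_comp_succAbove]
  · exact Fin.insertNth_comp_succAbove _ _ _

theorem card_smul_setOf_dotProduct_eq_zero [Finite S] (hx : x i = 1) (c : S) :
    Nat.card ↥(c • {z | x ⬝ᵥ z = 0} : Set (Fin (m + 1) → S)) =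
      Nat.card ↥(c • Set.univ : Set (Fin m → S)) := by
  let π : (Fin (m + 1) → S) →ₗ[S] Fin m → S := LinearMap.funLeft S S i.succAbove
  have hsub : (c • {z | x ⬝ᵥ z = 0} : Set (Fin (m + 1) → S)) ⊆ {z | x ⬝ᵥ z = 0} := by
    rintro _ ⟨z, hz : x ⬝ᵥ z = 0, rfl⟩
    show x ⬝ᵥ (c • z) = 0
    rw [dotProduct_smul, hz, smul_zero]
  rw [← image_comp_succAbove_setOf_dotProduct_eq_zero hx]
  change _ = Nat.card ↥(c • π '' _)
  rw [← image_smul_set]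
  exact (Nat.card_image_of_injOn
    ((injOn_comp_succAbove_setOf_dotProduct_eq_zero hx).mono hsub)).symm

theorem surjective_vecMul_of_apply_eq_one {ι κ : Type*} [Fintype ι] [DecidableEq ι]
    {x : ι → S} {i : ι} (hx : x i = 1) : Function.Surjective fun b : Matrix ι κ S => x ᵥ* b :=
  fun w => ⟨vecMulVec (Pi.single i 1) w, by
    dsimp only
    rw [vecMul_vecMulVec, dotProduct_single_one, hx, one_smul]⟩

variable {ι : Type*} [Fintype ι]

theorem image_vecMul_eq_setOf_dotProduct_eq_zero {K : Set (Matrix ι ι S)}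
    (hK_alt : ∀ a ∈ K, ∀ v, v ⬝ᵥ (v ᵥ* a) = 0)
    (hK_wedge : ∀ p z, vecMulVec p z - vecMulVec z p ∈ K) {x p : ι → S} (hxp : x ⬝ᵥ p = 1) :
    (fun a => x ᵥ* a) '' K = {z | x ⬝ᵥ z = 0} := by
  ext z
  constructor
  · rintro ⟨a, ha, rfl⟩
    exact hK_alt a ha x
  · intro (hz : x ⬝ᵥ z = 0)
    refine ⟨_, hK_wedge p z, ?_⟩
    simp [vecMul_sub, vecMul_vecMulVec, hxp, hz]

theorem card_image_vecMul_eq_card_range [Finite S]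
    {K : Set (Matrix (Fin (m + 1)) (Fin (m + 1)) S)}
    (hK_alt : ∀ a ∈ K, ∀ v, v ⬝ᵥ (v ᵥ* a) = 0)
    (hK_wedge : ∀ p z, vecMulVec p z - vecMulVec z p ∈ K) (hx : x i = 1) (c : S) :
    Nat.card ((fun a => (c • x) ᵥ* a) '' K) =
      Nat.card (Set.range fun b : Matrix (Fin (m + 1)) (Fin m) S => (c • x) ᵥ* b) := by
  have hK_image : (fun a => (c • x) ᵥ* a) '' K = c • {z | x ⬝ᵥ z = 0} := by
    rw [← image_vecMul_eq_setOf_dotProduct_eq_zero hK_alt hK_wedge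
      ((dotProduct_single_one x i).trans hx), ← Set.image_smul, Set.image_image]
    simp_rw [smul_vecMul]
  have hrange : (Set.range fun b : Matrix (Fin (m + 1)) (Fin m) S => (c • x) ᵥ* b) =
      c • Set.univ := by
    simp_rw [smul_vecMul]
    rw [Set.range_smul, (surjective_vecMul_of_apply_eq_one hx).range_eq]
  rw [hK_image, hrange, card_smul_setOf_dotProduct_eq_zero hx]

end Unimodular

def skewSymmetricMatrices (ι R : Type*) [AddCommGroup R] : AddSubgroup (Matrix ι ι R) where
  carrier := {a | a + aᵀ = 0}
  zero_mem' := by simp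
  add_mem' {a b} (ha : a + aᵀ = 0) (hb : b + bᵀ = 0) := by
    show a + b + (a + b)ᵀ = 0
    rw [transpose_add, add_add_add_comm, ha, hb, add_zero]
  neg_mem' {a} (ha : a + aᵀ = 0) := by
    show -a + (-a)ᵀ = 0
    rw [transpose_neg, ← neg_add, ha, neg_zero]

@[simp]
theorem coe_skewSymmetricMatrices (ι R : Type*) [AddCommGroup R] :
    (skewSymmetricMatrices ι R : Set (Matrix ι ι R)) = {a | a + aᵀ = 0} :=
  rfl

theorem dotProduct_vecMul_self_eq_zero_of_add_transpose_eq_zero {ι R : Type*} [Fintype ι]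
    [CommRing R] [NoZeroDivisors R] (h2 : (2 : R) ≠ 0) {a : Matrix ι ι R} (ha : a + aᵀ = 0)
    (v : ι → R) : v ⬝ᵥ (v ᵥ* a) = 0 := by
  have h : v ⬝ᵥ (v ᵥ* a) + v ⬝ᵥ (v ᵥ* aᵀ) = 0 := by
    rw [← dotProduct_add, ← vecMul_add, ha, vecMul_zero, dotProduct_zero]
  rw [vecMul_transpose, dotProduct_mulVec, dotProduct_comm (v ᵥ* a), ← two_mul] at h
  exact (mul_eq_zero.mp h).resolve_left h2

theorem reduceMod_coe_addSubgroup {R : Type*} [CommRing R] {d e : ℕ}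
    (N : AddSubgroup (Matrix (Fin d) (Fin e) R)) (c : Ideal R) :
    reduceMod (N : Set (Matrix (Fin d) (Fin e) R)) c =
      N.map (Ideal.Quotient.mk c).toAddMonoidHom.mapMatrix := by
  rw [AddSubgroup.coe_map]
  rfl

section Reduction

variable {ι R S : Type*} [CommRing R] [CommRing S] {f : R →+* S}

theorem dotProduct_vecMul_self_eq_zero_of_mem_map [Fintype ι] [NoZeroDivisors R]
    (h2 : (2 : R) ≠ 0) (hf : Function.Surjective f) {a : Matrix ι ι S}
    (ha : a ∈ (skewSymmetricMatrices ι R).map f.toAddMonoidHom.mapMatrix) (v : ι → S) :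
    v ⬝ᵥ (v ᵥ* a) = 0 := by
  obtain ⟨a, ha, rfl⟩ := ha
  obtain ⟨v, rfl⟩ := hf.comp_left v
  have hmap : (f ∘ v) ᵥ* a.map f = f ∘ (v ᵥ* a) := funext fun j => (f.map_vecMul a v j).symm
  change (f ∘ v) ⬝ᵥ ((f ∘ v) ᵥ* a.map f) = 0
  rw [hmap, ← f.map_dotProduct, dotProduct_vecMul_self_eq_zero_of_add_transpose_eq_zero h2 ha,
    map_zero]

theorem vecMulVec_sub_vecMulVec_mem_map (hf : Function.Surjective f) (p z : ι → S) :
    vecMulVec p z - vecMulVec z p ∈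
      (skewSymmetricMatrices ι R).map f.toAddMonoidHom.mapMatrix := by
  obtain ⟨p, rfl⟩ := hf.comp_left p
  obtain ⟨z, rfl⟩ := hf.comp_left z
  refine ⟨vecMulVec p z - vecMulVec z p, ?_, ?_⟩
  · show _ + _ = 0
    rw [transpose_sub, transpose_vecMulVec, transpose_vecMulVec, sub_add_sub_cancel', sub_self]
  · ext
    simp [vecMulVec_apply]

end Reduction

theorem IsDiscreteValuationRing.exists_eq_smul_and_apply_eq_one {O ι : Type*} [CommRing O]
    [IsDomain O] [IsDiscreteValuationRing O] [Finite ι] [Nonempty ι] (f : ι → O) :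
    ∃ (c : O) (g : ι → O) (i : ι), g i = 1 ∧ f = c • g := by
  classical
  obtain ⟨i, hi⟩ := Finite.exists_min (addVal O ∘ f)
  choose t ht using fun j => addVal_le_iff_dvd.mp (hi j)
  refine ⟨f i, Function.update t i 1, i, by simp, funext fun j => ?_⟩
  rcases eq_or_ne j i with rfl | hj
  · simp
  · simp [Function.update_of_ne hj, ht j]

theorem card_image_vecMul_map_skewSymmetricMatrices {O S : Type*} [CommRing O] [IsDomain O]
    [IsDiscreteValuationRing O] [CommRing S] [Finite S] (h2 : (2 : O) ≠ 0) {f : O →+* S}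
    (hf : Function.Surjective f) {d : ℕ} (x : Fin d → S) :
    Nat.card ((fun a => x ᵥ* a) ''
        ((skewSymmetricMatrices (Fin d) O).map f.toAddMonoidHom.mapMatrix :
          Set (Matrix (Fin d) (Fin d) S))) =
      Nat.card (Set.range fun b : Matrix (Fin d) (Fin (d - 1)) S => x ᵥ* b) := by
  cases d with
  | zero =>
    have : IsEmpty (Fin (0 - 1)) := inferInstanceAs (IsEmpty (Fin 0))
    rw [Nat.card_of_subsingleton (⟨0, 0, zero_mem _, vecMul_zero _⟩ : (fun a => x ᵥ* a) '' _),
      Nat.card_of_subsingleton (⟨0, 0, vecMul_zero _⟩ :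
        Set.range fun b : Matrix (Fin 0) (Fin (0 - 1)) S => x ᵥ* b)]
  | succ m =>
    obtain ⟨x, rfl⟩ := hf.comp_left x
    dsimp only
    obtain ⟨c, g, i, hg, rfl⟩ := IsDiscreteValuationRing.exists_eq_smul_and_apply_eq_one x
    have hfg : f ∘ (c • g) = f c • (f ∘ g) := by ext; simp
    rw [hfg]
    exact card_image_vecMul_eq_card_range
      (fun _ => dotProduct_vecMul_self_eq_zero_of_mem_map h2 hf)
      (vecMulVec_sub_vecMulVec_mem_map hf) (i := i) (by simp [hg]) (f c)

/-- If `2 ≠ 0` in the DVR `O`, then the ask zeta function of `so_d(O)` coincides with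
that of the full module of `d × (d-1)` matrices:
at every level `n`, `ask(so_d(O)_n) = ask(Mat_{d×(d-1)}(O/𝔪^n))`. -/
theorem ask_so_eq_ask_rect {O : Type*} [CommRing O] [IsDomain O] [IsDiscreteValuationRing O]
    [Finite (IsLocalRing.ResidueField O)]
    (h2 : (2 : O) ≠ 0) (d : ℕ) (n : ℕ) :
    ask (reduceMod {a : Matrix (Fin d) (Fin d) O | a + a.transpose = 0}
        (IsLocalRing.maximalIdeal O ^ n)) =
      ask (Set.univ :
        Set (Matrix (Fin d) (Fin (d - 1)) (O ⧸ IsLocalRing.maximalIdeal O ^ n))) := by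
  have : Finite (O ⧸ IsLocalRing.maximalIdeal O) := ‹Finite (IsLocalRing.ResidueField O)›
  have : Finite (O ⧸ IsLocalRing.maximalIdeal O ^ n) :=
    Ideal.finite_quotient_pow (IsNoetherian.noetherian _) n
  rw [← coe_skewSymmetricMatrices, reduceMod_coe_addSubgroup, ← AddSubgroup.coe_top,
    ask_eq_finsum_inv_card_image, ask_eq_finsum_inv_card_image]
  refine finsum_congr fun x => ?_
  rw [AddSubgroup.coe_top, Set.image_univ,
    card_image_vecMul_map_skewSymmetricMatrices h2 Ideal.Quotient.mk_surjective]
end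

section
/- Let O be a discrete valuation ring with maximal ideal 𝔪 and finite residue field. Let Sym_d(O) = {a ∈ Mat_d(O) : a^⊤ = a}. For n ≥ 0, let Sym_d(O)_n denote the image of Sym_d(O) under entrywise reduction Mat_d(O) → Mat_d(O/𝔪^n). Then for every n ≥ 0, ask(Sym_d(O)_n) = ask(Mat_d(O/𝔪^n)); that is, the ask zeta function of the symmetric matrices equals that of the full matrix algebra gl_d(O). -/
open Matrix

theorem finsum_natCard_setOf_comm {α β : Type*} [Finite α] [Finite β] (r : α → β → Prop) :
    ∑ᶠ a, (Nat.card {b | r a b} : ℚ) = ∑ᶠ b, (Nat.card {a | r a b} : ℚ) := by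
  classical
  cases nonempty_fintype α
  cases nonempty_fintype β
  simp only [finsum_eq_sum_of_fintype, Nat.card_eq_fintype_card, Fintype.card_subtype,
    Set.mem_ofPred_eq]
  exact_mod_cast Finset.sum_card_bipartiteAbove_eq_sum_card_bipartiteBelow r

theorem LinearMap.natCard_ker_mul_natCard_range {R M V : Type*} [Ring R] [AddCommGroup M]
    [Module R M] [AddCommGroup V] [Module R V] (f : M →ₗ[R] V) :
    Nat.card (ker f) * Nat.card (range f) = Nat.card M := by
  rw [Submodule.card_eq_card_quotient_mul_card (ker f),
    Nat.card_congr f.quotKerEquivRange.toEquiv, mul_comm]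

theorem PreValuationRing.exists_dvd_forall {S ι : Type*} [CommRing S] [PreValuationRing S]
    [Finite ι] [Nonempty ι] (x : ι → S) : ∃ k, ∀ i, x k ∣ x i := by
  classical
  obtain ⟨k, hk⟩ := Finite.exists_max fun i => Ideal.span {x i}
  exact ⟨k, fun i => Ideal.span_singleton_le_span_singleton.mp (hk i)⟩

namespace Matrix

section Symmetric

variable (R ι : Type*) [CommSemiring R]

def symmetricSubmodule : Submodule R (Matrix ι ι R) where
  carrier := {A | A.IsSymm}
  add_mem' := IsSymm.add
  zero_mem' := isSymm_zero
  smul_mem' r _ hA := hA.smul r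

variable {R ι}

theorem image_map_setOf_isSymm {α β : Type*} [LinearOrder ι] {f : α → β}
    (hf : Function.Surjective f) :
    (fun A : Matrix ι ι α => A.map f) '' {A | A.IsSymm} = {B | B.IsSymm} := by
  refine Set.Subset.antisymm (Set.image_subset_iff.mpr fun A hA => hA.map f) fun B hB => ?_
  choose g hg using hf
  refine ⟨of fun i j => g (B (min i j) (max i j)), IsSymm.ext fun i j => ?_, ext fun i j => ?_⟩
  · simp only [of_apply, min_comm, max_comm]
  · rcases le_total i j with h | h
    · simp [hg, h]
    · simp [hg, h, hB.apply]

end Symmetric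

variable {S ι : Type*} [CommRing S] [Fintype ι]

theorem exists_isSymm_vecMul_eq_of_dotProduct_eq_one {c e : ι → S} (hce : c ⬝ᵥ e = 1)
    (u : ι → S) : ∃ b : Matrix ι ι S, b.IsSymm ∧ c ᵥ* b = u := by
  refine ⟨vecMulVec e u + vecMulVec u e - (c ⬝ᵥ u) • vecMulVec e e, ?_, ?_⟩
  · simp [IsSymm, transpose_smul, add_comm]
  · simp [vecMul_sub, vecMul_add, vecMul_smul, vecMul_vecMulVec, hce]

theorem exists_isSymm_vecMul_eq [PreValuationRing S] (x : ι → S) (a : Matrix ι ι S) :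
    ∃ b : Matrix ι ι S, b.IsSymm ∧ x ᵥ* b = x ᵥ* a := by
  classical
  cases isEmpty_or_nonempty ι
  · exact ⟨a, Subsingleton.elim _ _, rfl⟩
  obtain ⟨k, hk⟩ := PreValuationRing.exists_dvd_forall x
  choose c hc using hk
  set c' := Function.update c k 1
  have hx : x = x k • c' := by
    ext i
    rcases eq_or_ne i k with rfl | hi
    · simp [c']
    · simpa [c', hi] using hc i
  have hce : c' ⬝ᵥ Pi.single k 1 = 1 := by simp [c']
  obtain ⟨b, hb, hcb⟩ := exists_isSymm_vecMul_eq_of_dotProduct_eq_one hce (c' ᵥ* a)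
  exact ⟨b, hb, by rw [hx, smul_vecMul, smul_vecMul, hcb]⟩

theorem map_vecMulBilin_symmetricSubmodule [PreValuationRing S] (x : ι → S) :
    (symmetricSubmodule S ι).map (vecMulBilin S S x) = LinearMap.range (vecMulBilin S S x) := by
  refine le_antisymm LinearMap.map_le_range ?_
  rintro _ ⟨a, rfl⟩
  obtain ⟨b, hb, hba⟩ := exists_isSymm_vecMul_eq x a
  exact ⟨b, hb, hba⟩

end Matrix

section Ask

variable {S : Type*} [CommRing S] [Finite S]

theorem ask_eq_finsum_inv_natCard_map {m n : Type*} [Fintype m] [Finite n]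
    (N : Submodule S (Matrix m n S)) :
    ask (N : Set (Matrix m n S)) =
      ∑ᶠ x : m → S, (Nat.card (N.map (vecMulBilin S S x)) : ℚ)⁻¹ := by
  have hcount (x : m → S) : (Nat.card N : ℚ)⁻¹ * Nat.card {a : N | x ᵥ* (a : Matrix m n S) = 0}
      = (Nat.card (N.map (vecMulBilin S S x)) : ℚ)⁻¹ := by
    set f := vecMulBilin S S x ∘ₗ N.subtype
    have hker : Nat.card {a : N | x ᵥ* (a : Matrix m n S) = 0} = Nat.card (LinearMap.ker f) :=
      rfl
    have hrange : LinearMap.range f = N.map (vecMulBilin S S x) := by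
      rw [LinearMap.range_comp, Submodule.range_subtype]
    have hpos : 0 < Nat.card (LinearMap.ker f) := Nat.card_pos
    rw [hker, ← hrange, ← f.natCard_ker_mul_natCard_range]
    push_cast
    field_simp
  calc ask (N : Set (Matrix m n S))
      = (Nat.card N : ℚ)⁻¹ * ∑ᶠ x : m → S, (Nat.card {a : N | x ᵥ* (a : Matrix m n S) = 0} : ℚ) :=
        congrArg _ (finsum_natCard_setOf_comm fun (a : N) x => x ᵥ* (a : Matrix m n S) = 0)
    _ = _ := by rw [mul_finsum]; exact finsum_congr hcount

theorem ask_setOf_isSymm_eq_ask_univ [PreValuationRing S] {ι : Type*} [Fintype ι] :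
    ask {A : Matrix ι ι S | A.IsSymm} = ask (Set.univ : Set (Matrix ι ι S)) := by
  have hsym := ask_eq_finsum_inv_natCard_map (symmetricSubmodule S ι)
  have huniv := ask_eq_finsum_inv_natCard_map (⊤ : Submodule S (Matrix ι ι S))
  rw [Submodule.top_coe] at huniv
  simp only [map_vecMulBilin_symmetricSubmodule, ← Submodule.map_top] at hsym
  exact hsym.trans huniv.symm

end Ask

/-- The ask zeta function of the symmetric matrices `Sym_d(O)` coincides with that of
`gl_d(O)`: at every level `n`, `ask(Sym_d(O)_n) = ask(Mat_d(O/𝔪^n))`. -/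
theorem ask_sym_eq_ask_gl {O : Type*} [CommRing O] [IsDomain O] [IsDiscreteValuationRing O]
    [Finite (IsLocalRing.ResidueField O)]
    (d : ℕ) (n : ℕ) :
    ask (reduceMod {a : Matrix (Fin d) (Fin d) O | a.transpose = a}
        (IsLocalRing.maximalIdeal O ^ n)) =
      ask (Set.univ : Set (Matrix (Fin d) (Fin d) (O ⧸ IsLocalRing.maximalIdeal O ^ n))) := by
  have : Finite (O ⧸ IsLocalRing.maximalIdeal O ^ n) :=
    IsLocalRing.finite_quotient_iff.mpr ⟨n, le_rfl⟩
  have : PreValuationRing (O ⧸ IsLocalRing.maximalIdeal O ^ n) :=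
    Ideal.Quotient.mk_surjective.preValuationRing (Ideal.Quotient.mk _).toMulHom
  rw [reduceMod, show {a : Matrix (Fin d) (Fin d) O | aᵀ = a} = {a | a.IsSymm} from rfl,
    image_map_setOf_isSymm Ideal.Quotient.mk_surjective]
  exact ask_setOf_isSymm_eq_ask_univ
end
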